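/- arXiv:1612.04703 — 2 statements merged into one kernel-verified Lean document; each statement's English description precedes it below -/
import Mathlib

section
/- Every finite ring has left stable range 1: if p, q ∈ R satisfy Rp + Rq = R, then there exists t ∈ R such that tp + q is a unit of R. -/
/-!
Units lift modulo the Jacobson radical, and `R ⧸ J(R)` is semisimple, hence by Wedderburn–Artin a
finite product of simple rings, so it suffices to treat a finite simple ring `R`. There all left
modules are isotypic, so left ideals of the same cardinality are isomorphic. Given `Rp + Rq = R`,
choose `D ≤ Rp` complementary to `Rq`. Counting gives `|ann q| = |D|` for the left annihilator
`ann q = ker (· * q)`; an isomorphism `ann q ≃ D`, extended by zero along a complement, is right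
multiplication by some `tp ∈ D`, and then right multiplication by `tp + q` is injective.
-/

open LinearMap

theorem exists_le_isCompl_of_sup_eq_top {α : Type*} [Lattice α] [BoundedOrder α]
    [IsModularLattice α] [ComplementedLattice α] {a b : α} (h : a ⊔ b = ⊤) :
    ∃ c ≤ a, IsCompl c b := by
  obtain ⟨c, hc⟩ := exists_isCompl (a ⊓ b)
  refine ⟨a ⊓ c, inf_le_left, ?_, ?_⟩
  · rw [disjoint_iff, inf_right_comm, hc.inf_eq_bot]
  · have ha : a = a ⊓ b ⊔ c ⊓ a := by
      rw [← sup_inf_assoc_of_le c inf_le_left, hc.sup_eq_top, top_inf_eq]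
    rw [codisjoint_iff, eq_top_iff, ← h]
    refine sup_le ?_ le_sup_right
    calc a = a ⊓ b ⊔ c ⊓ a := ha
      _ ≤ a ⊓ c ⊔ b := sup_le (inf_le_right.trans le_sup_right) (inf_comm c a ▸ le_sup_left)

theorem card_ker_eq_card_of_isCompl_range {R M : Type*} [Ring R] [AddCommGroup M] [Module R M]
    [Finite M] (f : M →ₗ[R] M) {D : Submodule R M} (h : IsCompl D (range f)) :
    Nat.card (ker f) = Nat.card D := by
  have hker : Nat.card M = Nat.card (ker f) * Nat.card (range f) := by
    rw [(ker f).card_eq_card_quotient_mul_card, Nat.card_congr f.quotKerEquivRange.toEquiv]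
  have hD : Nat.card M = Nat.card D * Nat.card (range f) := by
    rw [← Nat.card_prod, Nat.card_congr (Submodule.prodEquivOfIsCompl _ _ h).toEquiv]
  exact Nat.eq_of_mul_eq_mul_right Nat.card_pos (hker.symm.trans hD)

theorem IsIsotypicOfType.nonempty_linearEquiv_of_card_eq {R M N S : Type*} [Ring R]
    [AddCommGroup M] [Module R M] [AddCommGroup N] [Module R N] [AddCommGroup S] [Module R S]
    [IsSemisimpleModule R M] [IsSemisimpleModule R N] [Module.Finite R M] [Module.Finite R N]
    [IsSimpleModule R S] [Finite S]
    (hM : IsIsotypicOfType R M S) (hN : IsIsotypicOfType R N S) (h : Nat.card M = Nat.card N) :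
    Nonempty (M ≃ₗ[R] N) := by
  obtain ⟨m, ⟨eM⟩⟩ := hM.linearEquiv_fun
  obtain ⟨n, ⟨eN⟩⟩ := hN.linearEquiv_fun
  have hmn : m = n := by
    have := IsSimpleModule.nontrivial R S
    rw [Nat.card_congr eM.toEquiv, Nat.card_congr eN.toEquiv, Nat.card_fun, Nat.card_fun,
      Nat.card_fin, Nat.card_fin] at h
    exact Nat.pow_right_injective Finite.one_lt_card h
  subst hmn
  exact ⟨eM.trans eN.symm⟩

section Ring

variable {R : Type*} [Ring R]

theorem isUnit_of_isUnit_mk_jacobson [IsDedekindFiniteMonoid R] {x : R}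
    (hx : IsUnit (Ideal.Quotient.mk (Ring.jacobson R) x)) : IsUnit x := by
  obtain ⟨y', hy'⟩ := hx.exists_left_inv
  obtain ⟨y, rfl⟩ := Ideal.Quotient.mk_surjective y'
  have hyx : y * x - 1 ∈ Ideal.jacobson ⊥ := by
    rw [Ideal.jacobson_bot, ← Ideal.Quotient.eq, map_mul, hy', map_one]
  obtain ⟨z, hz⟩ := Ideal.mem_jacobson_iff.mp hyx 1
  rw [Ideal.mem_bot, mul_one, mul_sub, mul_one, sub_add_cancel, sub_eq_zero] at hz
  exact .of_mul_eq_one_right (z * y) (by rw [mul_assoc, hz])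

theorem exists_isUnit_mul_add_of_disjoint [IsArtinianRing R] {p q : R} (φ : R →ₗ[R] R)
    (hφp : range φ ≤ Ideal.span {p}) (hφq : Disjoint (range φ) (Ideal.span {q}))
    (hker : Disjoint (ker φ) (ker (toSpanSingleton R R q))) :
    ∃ t : R, IsUnit (t * p + q) := by
  obtain ⟨t, ht⟩ := Ideal.mem_span_singleton'.mp (hφp (mem_range_self φ 1))
  have hφ (r : R) : φ r = r * (t * p) := by
    rw [ht, ← smul_eq_mul, ← map_smul, smul_eq_mul, mul_one]
  have hreg (r : R) (hr : r * (t * p + q) = 0) : r = 0 := by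
    have hφr : φ r = -r * q := by rw [hφ, neg_mul, eq_neg_iff_add_eq_zero, ← mul_add, hr]
    have hφr0 : φ r = 0 := Submodule.disjoint_def.mp hφq _ (mem_range_self φ r)
      (hφr ▸ Ideal.mem_span_singleton'.mpr ⟨-r, rfl⟩)
    have hrq : r * q = 0 := by rwa [hφr0, eq_comm, neg_mul, neg_eq_zero] at hφr
    exact Submodule.disjoint_def.mp hker r hφr0 hrq
  refine ⟨t, IsArtinianRing.isUnit_iff_isRightRegular.mpr fun r s hrs ↦ ?_⟩
  exact sub_eq_zero.mp (hreg _ (by rw [sub_mul]; exact sub_eq_zero.mpr hrs))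

end Ring

def IsLeftStableRangeOne (R : Type*) [Ring R] : Prop :=
  ∀ a b p q : R, a * p + b * q = 1 → ∃ t : R, IsUnit (t * p + q)

theorem IsLeftStableRangeOne.of_surjective {R S : Type*} [Ring R] [Ring S] (f : R →+* S)
    (hf : Function.Surjective f) (hunit : ∀ x, IsUnit (f x) → IsUnit x)
    (hS : IsLeftStableRangeOne S) : IsLeftStableRangeOne R := by
  intro a b p q hab
  obtain ⟨t', ht'⟩ := hS (f a) (f b) (f p) (f q) (by simp only [← map_mul, ← map_add, hab, map_one])
  obtain ⟨t, rfl⟩ := hf t'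
  exact ⟨t, hunit _ (by simpa only [map_add, map_mul] using ht')⟩

theorem IsLeftStableRangeOne.pi {ι : Type*} {R : ι → Type*} [∀ i, Ring (R i)]
    (h : ∀ i, IsLeftStableRangeOne (R i)) : IsLeftStableRangeOne (∀ i, R i) := by
  intro a b p q hab
  choose t ht using fun i ↦ h i (a i) (b i) (p i) (q i) (congrFun hab i)
  exact ⟨t, Pi.isUnit_iff.mpr ht⟩

theorem isLeftStableRangeOne_of_isSimpleRing {R : Type*} [Ring R] [IsSimpleRing R] [Finite R] :
    IsLeftStableRangeOne R := by
  intro a b p q hab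
  have hpq : Ideal.span {p} ⊔ Ideal.span {q} = ⊤ := by
    rw [Ideal.eq_top_iff_one, ← hab]
    exact Submodule.add_mem_sup (Ideal.mul_mem_left _ a (Ideal.mem_span_singleton_self p))
      (Ideal.mul_mem_left _ b (Ideal.mem_span_singleton_self q))
  obtain ⟨D, hDp, hDq⟩ := exists_le_isCompl_of_sup_eq_top hpq
  set f := toSpanSingleton R R q
  have hcard : Nat.card (ker f) = Nat.card D :=
    card_ker_eq_card_of_isCompl_range f (by rwa [range_toSpanSingleton])
  obtain ⟨S, hS⟩ := IsAtomic.exists_atom (Ideal R)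
  have : IsSimpleModule R S := isSimpleModule_iff_isAtom.mpr hS
  have hR : IsIsotypicOfType R R S := IsSimpleRing.isIsotypic R R S
  obtain ⟨θ⟩ := IsIsotypicOfType.nonempty_linearEquiv_of_card_eq
    (hR.of_injective _ (ker f).injective_subtype) (hR.of_injective _ D.injective_subtype) hcard
  obtain ⟨E, hE⟩ := exists_isCompl (ker f)
  set φ := D.subtype ∘ₗ θ.toLinearMap ∘ₗ (ker f).projectionOnto E hE
  have hφD : range φ ≤ D := (range_comp_le_range _ _).trans D.range_subtype.le
  refine exists_isUnit_mul_add_of_disjoint φ (hφD.trans hDp) (hDq.disjoint.mono_left hφD) ?_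
  refine Submodule.disjoint_def.mpr fun r hφr hr ↦ ?_
  have hθr : θ ⟨r, hr⟩ = 0 := by
    simpa [φ, Submodule.projectionOnto_apply_left hE ⟨r, hr⟩] using hφr
  simpa using hθr

theorem isLeftStableRangeOne_of_isSemisimpleRing {R : Type*} [Ring R] [IsSemisimpleRing R]
    [Finite R] : IsLeftStableRangeOne R := by
  obtain ⟨n, D, d, _, _, ⟨e⟩⟩ := IsSemisimpleRing.exists_ringEquiv_pi_matrix_divisionRing R
  have (i : Fin n) : Finite (Matrix (Fin (d i)) (Fin (d i)) (D i)) :=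
    .of_surjective (fun x ↦ e x i) ((Function.surjective_eval i).comp e.surjective)
  exact (IsLeftStableRangeOne.pi fun _ ↦ isLeftStableRangeOne_of_isSimpleRing).of_surjective
    e.toRingHom e.surjective fun _ ↦ (MulEquiv.isUnit_map e).mp

theorem isLeftStableRangeOne_of_finite {R : Type*} [Ring R] [Finite R] : IsLeftStableRangeOne R :=
  have : Finite (R ⧸ Ring.jacobson R) := .of_surjective _ Ideal.Quotient.mk_surjective
  isLeftStableRangeOne_of_isSemisimpleRing.of_surjective _ Ideal.Quotient.mk_surjective
    fun _ ↦ isUnit_of_isUnit_mk_jacobson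

/-- Every finite ring has (left) stable range 1: if `Rp + Rq = R` then there is `t`
with `tp + q` a unit. -/
theorem finite_ring_stable_range_one {R : Type*} [Ring R] [Finite R] (p q : R)
    (h : Ideal.span {p} ⊔ Ideal.span {q} = ⊤) :
    ∃ t : R, IsUnit (t * p + q) := by
  have hone : (1 : R) ∈ Ideal.span {p, q} := by
    rw [Ideal.span_insert, h]
    exact Submodule.mem_top
  obtain ⟨a, b, hab⟩ := Ideal.mem_span_pair.mp hone
  exact isLeftStableRangeOne_of_finite a b p q hab
end

section
/- Run the greedy lexicode algorithm over a finite principal left ideal ring R: fix an ordered basis b_1,...,b_n of R^n, set V_0 = {0}, V_i = R{b_1,...,b_i}, C_0 = {0}, and at step i, if there is a vector a_i ∈ V_i \ V_{i−1} (chosen minimal in the lexicographic order) such that P(γ a_i + c) holds for all γ ∈ Γ and c ∈ C_{i−1}, set C_i = R a_i + C_{i−1}, otherwise C_i = C_{i−1}. Then each C_i is a left submodule of R^n and P(x) holds for every nonzero x ∈ C_i. -/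
/-!
Over a finite ring, two generators of the same principal left ideal are left associates: from
`y = t x` and `x = s y` one extracts an idempotent `e` (a power of `st`) and elements exhibiting
`Re ≅ Rf`, and cancellation of finite modules (Lovász's homomorphism-counting argument) upgrades
this to a unit `u` with `y = u x`. Hence every nonzero multiple `r a` of a selected vector is a unit
multiple of `γ a` for the generator `γ ∈ Γ` of `Rr`, so the admissibility of `a` and the unit
invariance of `P` propagate the property from `C (i - 1)` to `R a + C (i - 1)`.
-/

open Classical in
/-- The submodule `V_i = R{b_1, …, b_i}` generated by the first `i` basis vectors. -/
noncomputable def Vlevel {R : Type*} [Ring R] {n : ℕ}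
    (b : Module.Basis (Fin n) R (Fin n → R)) (i : ℕ) : Submodule R (Fin n → R) :=
  Submodule.span R (⇑b '' {j : Fin n | (j : ℕ) < i})

open Classical in
/-- The level of a vector: the least `i` with `x ∈ V_i`, computed from the highest
index of a nonzero coordinate with respect to the basis `b`. -/
noncomputable def lvl {R : Type*} [Ring R] {n : ℕ}
    (b : Module.Basis (Fin n) R (Fin n → R)) (x : Fin n → R) : ℕ :=
  Finset.univ.sup fun j : Fin n => if b.repr x j ≠ 0 then (j : ℕ) + 1 else 0

/-- The lexicographic ordering on `Rⁿ` induced by a total order `L` on `R` and the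
ordered basis `b`: first compare levels, then compare coefficient vectors
lexicographically from the highest index down. -/
def lexLt {R : Type*} [Ring R] {n : ℕ} (L : LinearOrder R)
    (b : Module.Basis (Fin n) R (Fin n → R)) (x y : Fin n → R) : Prop :=
  lvl b x < lvl b y ∨
    (lvl b x = lvl b y ∧ ∃ k : Fin n, L.lt (b.repr x k) (b.repr y k) ∧
      ∀ j : Fin n, k < j → b.repr x j = b.repr y j)

/-- A total order `L` on `R` is respectful if whenever `Rx ⊋ Ry` (both nonzero),
some unit multiple `αx` of `x` precedes every unit multiple `uy` of `y`. -/
def RespectfulOrder {R : Type*} [Ring R] (L : LinearOrder R) : Prop :=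
  ∀ x y : R, x ≠ 0 → y ≠ 0 → Ideal.span {y} < Ideal.span {x} →
    ∃ α : Rˣ, ∀ u : Rˣ, L.lt ((α : R) * x) ((u : R) * y)

/-- Admissibility of a candidate vector `x` at a stage with current code `C`:
`P(γx + c)` holds for every generator `γ ∈ Γ` and every `c ∈ C`. -/
def Admissible {R : Type*} [Ring R] {n : ℕ} (P : (Fin n → R) → Bool) (Γ : Set R)
    (C : Submodule R (Fin n → R)) (x : Fin n → R) : Prop :=
  ∀ γ ∈ Γ, ∀ c ∈ C, P (γ • x + c) = true

/-- A run of the greedy lexicode algorithm: `C 0 = 0`, and at each step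
`i = 1, …, n` either the lexicographically smallest admissible vector
`a i ∈ V_i \ V_{i-1}` is selected and `C i = R·(a i) + C (i-1)`, or no vector of
`V_i \ V_{i-1}` is admissible and `C i = C (i-1)`. -/
def GreedyRun {R : Type*} [Ring R] {n : ℕ} (L : LinearOrder R)
    (b : Module.Basis (Fin n) R (Fin n → R)) (P : (Fin n → R) → Bool) (Γ : Set R)
    (C : ℕ → Submodule R (Fin n → R)) (a : ℕ → (Fin n → R)) (sel : ℕ → Prop) : Prop :=
  C 0 = ⊥ ∧
  ∀ i : ℕ, 1 ≤ i → i ≤ n →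
    ((sel i ∧ a i ∈ Vlevel b i ∧ a i ∉ Vlevel b (i - 1) ∧
        Admissible P Γ (C (i - 1)) (a i) ∧
        (∀ x, x ∈ Vlevel b i → x ∉ Vlevel b (i - 1) →
          Admissible P Γ (C (i - 1)) x → x = a i ∨ lexLt L b (a i) x) ∧
        C i = Submodule.span R {a i} ⊔ C (i - 1))
      ∨ (¬ sel i ∧
          (∀ x, x ∈ Vlevel b i → x ∉ Vlevel b (i - 1) →
            ¬ Admissible P Γ (C (i - 1)) x) ∧
          C i = C (i - 1)))

open Function

universe u

section HomCounting

variable {R : Type*} [Ring R]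

instance LinearMap.finite_of_finite {V X : Type*} [AddCommGroup V] [Module R V] [AddCommGroup X]
    [Module R X] [Finite V] [Finite X] : Finite (V →ₗ[R] X) :=
  Finite.of_injective _ DFunLike.coe_injective

instance Submodule.Quotient.finite {V : Type*} [AddCommGroup V] [Module R V] [Finite V]
    (K : Submodule R V) : Finite (V ⧸ K) :=
  Finite.of_surjective _ K.mkQ_surjective

theorem Submodule.card_quotient_lt {V : Type*} [AddCommGroup V] [Module R V] [Finite V]
    {K : Submodule R V} (hK : K ≠ ⊥) : Nat.card (V ⧸ K) < Nat.card V := by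
  obtain ⟨x, hxK, hx0⟩ := (Submodule.ne_bot_iff K).mp hK
  have := Fintype.ofFinite V
  have := Fintype.ofFinite (V ⧸ K)
  rw [Nat.card_eq_fintype_card, Nat.card_eq_fintype_card]
  exact Fintype.card_lt_of_surjective_not_injective _ K.mkQ_surjective fun hinj =>
    hx0 (hinj (by simpa using hxK))

def linearMapKerEqEquiv {V X : Type*} [AddCommGroup V] [Module R V] [AddCommGroup X] [Module R X]
    (K : Submodule R V) :
    {f : V →ₗ[R] X // LinearMap.ker f = K} ≃ {g : V ⧸ K →ₗ[R] X // Injective g} where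
  toFun f := ⟨K.liftQ f.1 f.2.ge, by
    rw [← LinearMap.ker_eq_bot, Submodule.ker_liftQ, f.2, Submodule.mkQ_map_self]⟩
  invFun g := ⟨g.1 ∘ₗ K.mkQ, by
    rw [LinearMap.ker_comp, LinearMap.ker_eq_bot.mpr g.2, Submodule.comap_bot, K.ker_mkQ]⟩
  left_inv f := Subtype.ext (K.liftQ_mkQ _ _)
  right_inv g := Subtype.ext (K.linearMap_qext (K.liftQ_mkQ _ _))

def linearMapEquivSigmaInjective (V X : Type*) [AddCommGroup V] [Module R V]
    [AddCommGroup X] [Module R X] :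
    (V →ₗ[R] X) ≃ Σ K : Submodule R V, {g : V ⧸ K →ₗ[R] X // Injective g} :=
  (Equiv.sigmaFiberEquiv fun f : V →ₗ[R] X => LinearMap.ker f).symm.trans
    (Equiv.sigmaCongrRight linearMapKerEqEquiv)

theorem card_injective_linearMap_congr {V W X : Type*} [AddCommGroup V] [Module R V]
    [AddCommGroup W] [Module R W] [AddCommGroup X] [Module R X] (e : V ≃ₗ[R] W) :
    Nat.card {g : V →ₗ[R] X // Injective g} = Nat.card {g : W →ₗ[R] X // Injective g} :=
  Nat.card_congr
    { toFun g := ⟨g.1 ∘ₗ e.symm.toLinearMap, g.2.comp e.symm.injective⟩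
      invFun g := ⟨g.1 ∘ₗ e.toLinearMap, g.2.comp e.injective⟩
      left_inv g := Subtype.ext (LinearMap.ext fun v => by simp)
      right_inv g := Subtype.ext (LinearMap.ext fun v => by simp) }

/-- Lovász's argument: sorting the linear maps out of `V` by their kernels, the counts of injective
maps out of the proper quotients of `V` are known by induction, leaving those out of `V` itself. -/
theorem card_injective_linearMap_eq_of_card_linearMap_eq {X Y : Type u} [AddCommGroup X]
    [Module R X] [AddCommGroup Y] [Module R Y] [Finite X] [Finite Y]
    (h : ∀ (V : Type u) [AddCommGroup V] [Module R V] [Finite V],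
      Nat.card (V →ₗ[R] X) = Nat.card (V →ₗ[R] Y))
    (V : Type u) [AddCommGroup V] [Module R V] [Finite V] :
    Nat.card {g : V →ₗ[R] X // Injective g} = Nat.card {g : V →ₗ[R] Y // Injective g} := by
  induction hV : Nat.card V using Nat.strong_induction_on generalizing V with
  | _ N ih =>
  have := Fintype.ofFinite (Submodule R V)
  have hsum := h V
  rw [Nat.card_congr (linearMapEquivSigmaInjective V X),
    Nat.card_congr (linearMapEquivSigmaInjective V Y), Nat.card_sigma, Nat.card_sigma] at hsum
  rw [← Finset.add_sum_erase _ _ (Finset.mem_univ (⊥ : Submodule R V)),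
    ← Finset.add_sum_erase _ _ (Finset.mem_univ (⊥ : Submodule R V)),
    Finset.sum_congr rfl fun K hK => ih _ (hV ▸ Submodule.card_quotient_lt
      (Finset.ne_of_mem_erase hK)) (V ⧸ K) rfl] at hsum
  have e := Submodule.quotEquivOfEqBot (⊥ : Submodule R V) rfl
  rw [← card_injective_linearMap_congr e, ← card_injective_linearMap_congr e]
  exact Nat.add_right_cancel hsum

theorem nonempty_linearEquiv_of_card_linearMap_eq {X Y : Type u} [AddCommGroup X]
    [Module R X] [AddCommGroup Y] [Module R Y] [Finite X] [Finite Y]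
    (h : ∀ (V : Type u) [AddCommGroup V] [Module R V] [Finite V],
      Nat.card (V →ₗ[R] X) = Nat.card (V →ₗ[R] Y)) :
    Nonempty (X ≃ₗ[R] Y) := by
  have exists_injective {A B : Type u} [AddCommGroup A] [Module R A] [AddCommGroup B] [Module R B]
      [Finite A] [Finite B] (hAB : Nat.card {g : A →ₗ[R] A // Injective g} =
        Nat.card {g : A →ₗ[R] B // Injective g}) : ∃ g : A →ₗ[R] B, Injective g := by
    have : Nonempty {g : A →ₗ[R] A // Injective g} := ⟨⟨LinearMap.id, injective_id⟩⟩
    obtain ⟨g, hg⟩ := (Nat.card_pos_iff.mp (hAB ▸ Nat.card_pos)).1.some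
    exact ⟨g, hg⟩
  obtain ⟨f, hf⟩ := exists_injective (card_injective_linearMap_eq_of_card_linearMap_eq h X)
  obtain ⟨g, hg⟩ := exists_injective
    (card_injective_linearMap_eq_of_card_linearMap_eq (fun V _ _ _ => (h V).symm) Y)
  exact ⟨.ofBijective f (hf.bijective_of_nat_card_le (Nat.card_le_card_of_injective g hg))⟩

theorem nonempty_linearEquiv_of_prod_linearEquiv {A : Type*} {B C : Type u} [AddCommGroup A]
    [Module R A] [AddCommGroup B] [Module R B] [AddCommGroup C] [Module R C] [Finite A]
    [Finite B] [Finite C] (e : (A × B) ≃ₗ[R] (A × C)) : Nonempty (B ≃ₗ[R] C) := by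
  refine nonempty_linearEquiv_of_card_linearMap_eq fun V _ _ _ => ?_
  have card_prod (D : Type u) [AddCommGroup D] [Module R D] :
      Nat.card (V →ₗ[R] A × D) = Nat.card (V →ₗ[R] A) * Nat.card (V →ₗ[R] D) := by
    rw [← Nat.card_prod, Nat.card_congr (LinearMap.prodEquiv ℕ).toEquiv]
  have hpos : 0 < Nat.card (V →ₗ[R] A) := Nat.card_pos
  apply Nat.eq_of_mul_eq_mul_left hpos
  rw [← card_prod, ← card_prod]
  exact Nat.card_congr (LinearEquiv.arrowCongrAddEquiv (.refl R V) e).toEquiv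

end HomCounting

theorem exists_pos_isIdempotentElem_pow {M : Type*} [Monoid M] [Finite M] (w : M) :
    ∃ k, 0 < k ∧ IsIdempotentElem (w ^ k) := by
  obtain ⟨m, n, hmn, hw⟩ := Finite.exists_ne_map_eq_of_infinite (w ^ · : ℕ → M)
  wlog hlt : m < n generalizing m n
  · exact this n m hmn.symm hw.symm (by omega)
  have periodic (j : ℕ) : ∀ a, m ≤ a → w ^ (a + j * (n - m)) = w ^ a := by
    induction j with
    | zero => simp
    | succ j ih =>
      intro a ha
      have hn : a + (j + 1) * (n - m) = a - m + n + j * (n - m) := by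
        rw [add_mul, one_mul]; omega
      rw [hn, ih _ (by omega), pow_add, ← hw, ← pow_add, Nat.sub_add_cancel ha]
  refine ⟨(m + 1) * (n - m), Nat.mul_pos m.succ_pos (by omega), ?_⟩
  rw [IsIdempotentElem, ← pow_add, periodic]
  exact (Nat.le_succ m).trans (Nat.le_mul_of_pos_right _ (by omega))

section UnitAssociates

variable {S : Type*} [Ring S]

theorem LinearEquiv.exists_unit_apply_eq_mul (θ : S ≃ₗ[S] S) : ∃ u : Sˣ, ∀ r, θ r = r * u := by
  refine ⟨⟨θ 1, θ.symm 1, ?_, ?_⟩, fun r => by simpa using θ.map_smul r 1⟩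
  · simpa using (θ.symm.map_smul (θ 1) 1).symm
  · simpa using (θ.map_smul (θ.symm 1) 1).symm

theorem isIdempotentElem_mulRight {e : S} (he : IsIdempotentElem e) :
    IsIdempotentElem (LinearMap.mulRight S e) :=
  LinearMap.ext fun r => by simp [mul_assoc, he.eq]

theorem mem_range_mulRight_iff {e : S} (he : IsIdempotentElem e) {r : S} :
    r ∈ LinearMap.range (LinearMap.mulRight S e) ↔ r * e = r :=
  LinearMap.IsIdempotentElem.mem_range_iff (isIdempotentElem_mulRight he)

/-- Right multiplication by `p` is an isomorphism `Se ≅ Sf`; cancelling this summand from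
`S = Se ⊕ S(1 - e) ≅ Sf ⊕ S(1 - f)` extends it to an automorphism of `S`, i.e. to right
multiplication by a unit. -/
theorem exists_unit_mul_eq_mul_of_isIdempotentElem [Finite S] {e f p q : S}
    (he : IsIdempotentElem e) (hf : IsIdempotentElem f) (hpq : p * q = e) (hqp : q * p = f) :
    ∃ u : Sˣ, e * u = e * p := by
  let φ : LinearMap.range (LinearMap.mulRight S e) ≃ₗ[S] LinearMap.range (LinearMap.mulRight S f) :=
    LinearEquiv.ofLinearMap
      ((LinearMap.mulRight S p).restrict fun r hr => by
        rw [mem_range_mulRight_iff he] at hr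
        rw [mem_range_mulRight_iff hf, LinearMap.mulRight_apply, ← hqp, ← mul_assoc,
          mul_assoc r, hpq, hr])
      ((LinearMap.mulRight S q).restrict fun r hr => by
        rw [mem_range_mulRight_iff hf] at hr
        rw [mem_range_mulRight_iff he, LinearMap.mulRight_apply, ← hpq, ← mul_assoc,
          mul_assoc r, hqp, hr])
      (by
        ext ⟨r, hr⟩
        rw [mem_range_mulRight_iff hf] at hr
        simp [mul_assoc, hqp, hr])
      (by
        ext ⟨r, hr⟩
        rw [mem_range_mulRight_iff he] at hr
        simp [mul_assoc, hpq, hr])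
  have hSe := LinearMap.IsIdempotentElem.isCompl (isIdempotentElem_mulRight he)
  have hSf := LinearMap.IsIdempotentElem.isCompl (isIdempotentElem_mulRight hf)
  obtain ⟨ψ⟩ := nonempty_linearEquiv_of_prod_linearEquiv
    ((Submodule.prodEquivOfIsCompl _ _ hSe).trans
      ((Submodule.prodEquivOfIsCompl _ _ hSf).symm.trans (φ.symm.prodCongr (.refl S _))))
  obtain ⟨u, hu⟩ := LinearEquiv.exists_unit_apply_eq_mul
    ((Submodule.prodEquivOfIsCompl _ _ hSe).symm.trans
      ((φ.prodCongr ψ).trans (Submodule.prodEquivOfIsCompl _ _ hSf)))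
  have hdecomp := Submodule.prodEquivOfIsCompl_symm_apply_left _ _ hSe
    ⟨e, (mem_range_mulRight_iff he).2 he.eq⟩
  refine ⟨u, ?_⟩
  rw [← hu e, LinearEquiv.trans_apply, hdecomp]
  simp [φ]

theorem exists_unit_mul_eq_of_mul_eq [Finite S] {x y s t : S} (hy : x * t = y)
    (hx : y * s = x) : ∃ u : Sˣ, x * u = y := by
  obtain ⟨k, hk, he⟩ := exists_pos_isIdempotentElem_pow (t * s)
  have hxe : ∀ n, x * (t * s) ^ n = x := fun n => by
    induction n with
    | zero => rw [pow_zero, mul_one]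
    | succ n ih => rw [pow_succ, ← mul_assoc, ih, ← mul_assoc, hy, hx]
  set e := (t * s) ^ k
  set q := s * (t * s) ^ (k - 1) * e
  have htq : t * q = e := by
    rw [← mul_assoc, ← mul_assoc, ← pow_succ', Nat.sub_add_cancel hk, he.eq]
  have hqe : q * e = q := by rw [mul_assoc, he.eq]
  have hf : IsIdempotentElem (q * t) := by
    rw [IsIdempotentElem, mul_assoc, ← mul_assoc t, htq, ← mul_assoc, hqe]
  obtain ⟨u, hu⟩ := exists_unit_mul_eq_mul_of_isIdempotentElem he hf htq rfl
  refine ⟨u, ?_⟩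
  rw [← hxe k, mul_assoc, hu, ← mul_assoc, hxe, hy]

theorem exists_unit_mul_eq_of_span_singleton_eq [Finite S] {x y : S}
    (h : Ideal.span {x} = Ideal.span {y}) : ∃ u : Sˣ, u * x = y := by
  obtain ⟨t, hy⟩ := Ideal.mem_span_singleton'.mp (h ▸ Ideal.mem_span_singleton_self y)
  obtain ⟨s, hx⟩ := Ideal.mem_span_singleton'.mp (h ▸ Ideal.mem_span_singleton_self x)
  have : Finite Sᵐᵒᵖ := Finite.of_equiv S MulOpposite.opEquiv
  obtain ⟨u, hu⟩ := exists_unit_mul_eq_of_mul_eq (x := MulOpposite.op x) (y := MulOpposite.op y)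
    (s := MulOpposite.op s) (t := MulOpposite.op t)
    (by rw [← MulOpposite.op_mul, hy]) (by rw [← MulOpposite.op_mul, hx])
  refine ⟨(Units.opEquiv u).unop, ?_⟩
  rw [Units.coe_unop_opEquiv, ← MulOpposite.unop_op x, ← MulOpposite.unop_mul, hu,
    MulOpposite.unop_op]

end UnitAssociates

theorem Admissible.property_of_mem_span_sup {R : Type*} [Ring R] [Finite R] {n : ℕ}
    {P : (Fin n → R) → Bool} (hP : ∀ (u : Rˣ) (x : Fin n → R), P ((u : R) • x) = P x)
    {Γ : Set R} (hΓ : ∀ r : R, r ≠ 0 → ∃ γ ∈ Γ, Ideal.span {r} = Ideal.span {γ})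
    {C : Submodule R (Fin n → R)} {a : Fin n → R} (ha : Admissible P Γ C a)
    (hC : ∀ x ∈ C, x ≠ 0 → P x = true) :
    ∀ x ∈ Submodule.span R {a} ⊔ C, x ≠ 0 → P x = true := by
  intro x hx hx0
  obtain ⟨_, hy, c, hc, rfl⟩ := Submodule.mem_sup.mp hx
  obtain ⟨r, rfl⟩ := Submodule.mem_span_singleton.mp hy
  by_cases hr : r = 0
  · rw [hr, zero_smul, zero_add] at hx0 ⊢
    exact hC c hc hx0
  obtain ⟨γ, hγ, hspan⟩ := hΓ r hr
  obtain ⟨u, rfl⟩ := exists_unit_mul_eq_of_span_singleton_eq hspan.symm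
  have hunit : (u * γ) • a + c = (u : R) • (γ • a + (↑u⁻¹ : R) • c) := by
    rw [smul_add, smul_smul, smul_smul, Units.mul_inv, one_smul]
  rw [hunit, hP]
  exact ha γ hγ _ (C.smul_mem _ hc)

theorem greedy_codes_satisfy_property_general {R : Type*} [Ring R] [Fintype R] {n : ℕ}
    (L : LinearOrder R) (b : Module.Basis (Fin n) R (Fin n → R))
    (P : (Fin n → R) → Bool)
    (hP : ∀ (u : Rˣ) (x : Fin n → R), P ((u : R) • x) = P x)
    (Γ : Set R)
    (hΓ : ∀ r : R, r ≠ 0 → ∃ γ ∈ Γ, Ideal.span {r} = Ideal.span {γ})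
    (C : ℕ → Submodule R (Fin n → R)) (a : ℕ → (Fin n → R)) (sel : ℕ → Prop)
    (hrun : GreedyRun L b P Γ C a sel) :
    ∀ i ≤ n, ∀ x ∈ C i, x ≠ 0 → P x = true := by
  obtain ⟨h0, hstep⟩ := hrun
  intro i
  induction i with
  | zero =>
    intro _ x hx hx0
    rw [h0, Submodule.mem_bot] at hx
    exact absurd hx hx0
  | succ i ih =>
    intro hin
    rcases hstep (i + 1) (by omega) hin with ⟨_, _, _, hadm, _, hC⟩ | ⟨_, _, hC⟩
    · rw [hC]
      exact hadm.property_of_mem_span_sup hP hΓ (ih (by omega))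
    · rw [hC]
      exact ih (by omega)

/-- Theorem: every code `C_i` produced by the greedy lexicode algorithm over a finite
principal left ideal ring is a left submodule of `Rⁿ` (by construction) all of whose
nonzero elements satisfy the left multiplicative property `P`. -/
theorem greedy_codes_satisfy_property {R : Type*} [Ring R] [Fintype R] {n : ℕ}
    (hPLIR : ∀ I : Ideal R, ∃ g : R, I = Ideal.span {g})
    (L : LinearOrder R) (b : Module.Basis (Fin n) R (Fin n → R))
    (P : (Fin n → R) → Bool)
    (hP : ∀ (u : Rˣ) (x : Fin n → R), P ((u : R) • x) = P x)
    (Γ : Set R)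
    (hΓ : ∀ r : R, r ≠ 0 → ∃ γ ∈ Γ, Ideal.span {r} = Ideal.span {γ})
    (C : ℕ → Submodule R (Fin n → R)) (a : ℕ → (Fin n → R)) (sel : ℕ → Prop)
    (hrun : GreedyRun L b P Γ C a sel) :
    ∀ i ≤ n, ∀ x ∈ C i, x ≠ 0 → P x = true :=
  greedy_codes_satisfy_property_general L b P hP Γ hΓ C a sel hrun
end
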